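/- For α, β > 0 and f measurable on (0,∞) with absolutely convergent integrals, the weighted composition formula I^α_{-,2}( s^{-2α-2β} (I^β_{-,2} f)(s) )(t) = t^{-2β} (I^{α+β}_{-,2}( s^{-2α} f(s) ))(t) holds for almost all t > 0. -/

import Mathlib

/-!
Unfolding both sides, the left-hand side is an iterated integral over `t < s < u`; exchanging the
order of integration (Fubini, which the absolute convergence hypothesis justifies) leaves the inner
integral `∫_t^u s^(-2α-2β) s (s² - t²)^(α-1) (u² - s²)^(β-1) ds`. The substitution `y = s⁻²` turns
it into a beta integral over `(u⁻², t⁻²)`, of value `B(α, β) / 2 · t^(-2β) u^(-2α) (u² - t²)^(α+β-1)`.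
This is the kernel of `I^(α+β)` up to the factor `t^(-2β)`, and `B(α, β) = Γ(α) Γ(β) / Γ(α + β)`
makes the Gamma factors collapse to `2 / Γ(α + β)`.
-/

open MeasureTheory Real Set

/-- Right-sided modified Erdélyi–Kober fractional integral of order `α`. -/
noncomputable def EKminus (α : ℝ) (f : ℝ → ℝ) (t : ℝ) : ℝ :=
  2 * (Real.Gamma α)⁻¹ * ∫ s in Ioi t, f s * s * (s ^ 2 - t ^ 2) ^ (α - 1)

theorem integral_Ioo_rpow_mul_one_sub_rpow {p q : ℝ} (hp : 0 < p) (hq : 0 < q) :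
    ∫ x in Ioo 0 1, x ^ (p - 1) * (1 - x) ^ (q - 1) = ProbabilityTheory.beta p q := by
  have hB := ProbabilityTheory.beta_pos hp hq
  set g : ℝ → ℝ := fun x => 1 / ProbabilityTheory.beta p q * x ^ (p - 1) * (1 - x) ^ (q - 1)
  have hg_nonneg : 0 ≤ᵐ[volume.restrict (Ioo 0 1)] g :=
    ae_restrict_of_forall_mem measurableSet_Ioo fun x hx => by
      have : 0 ≤ 1 - x := by linarith [hx.2]
      have := hx.1.le
      simp only [g, Pi.zero_apply]; positivity
  have hg_meas : AEStronglyMeasurable g (volume.restrict (Ioo 0 1)) := by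
    simp only [g]; fun_prop
  have h := ProbabilityTheory.lintegral_betaPDF_eq_one hp hq
  rw [ProbabilityTheory.lintegral_betaPDF] at h
  have hg_int : IntegrableOn g (Ioo 0 1) :=
    (lintegral_ofReal_ne_top_iff_integrable hg_meas hg_nonneg).1 (by rw [h]; simp)
  rw [← ofReal_integral_eq_lintegral_ofReal hg_int hg_nonneg] at h
  simp_rw [ENNReal.ofReal_eq_one, g, mul_assoc, integral_const_mul] at h
  field_simp at h
  exact h

theorem integral_Ioo_sub_rpow_mul_sub_rpow {p q a b : ℝ} (hp : 0 < p) (hq : 0 < q) (hab : a < b) :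
    ∫ x in Ioo a b, (x - a) ^ (p - 1) * (b - x) ^ (q - 1)
      = ProbabilityTheory.beta p q * (b - a) ^ (p + q - 1) := by
  have hc : 0 < b - a := sub_pos.2 hab
  set f : ℝ → ℝ := fun x => (x - a) ^ (p - 1) * (b - x) ^ (q - 1)
  have hscale : EqOn (fun v => f (a + (b - a) * v))
      (fun v => (b - a) ^ (p + q - 2) * (v ^ (p - 1) * (1 - v) ^ (q - 1))) (uIcc 0 1) := by
    intro v hv
    rw [uIcc_of_le zero_le_one] at hv
    have e₁ : a + (b - a) * v - a = (b - a) * v := by ring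
    have e₂ : b - (a + (b - a) * v) = (b - a) * (1 - v) := by ring
    simp only [f, e₁, e₂]
    rw [mul_rpow hc.le hv.1, mul_rpow hc.le (by linarith [hv.2]),
      show p + q - 2 = (p - 1) + (q - 1) by ring, rpow_add hc]
    ring
  have hsubst := intervalIntegral.integral_comp_add_mul f hc.ne' a (a := 0) (b := 1)
  rw [intervalIntegral.integral_congr hscale, intervalIntegral.integral_const_mul,
    intervalIntegral.integral_of_le zero_le_one, integral_Ioc_eq_integral_Ioo,
    integral_Ioo_rpow_mul_one_sub_rpow hp hq] at hsubst
  simp only [mul_zero, add_zero, mul_one, add_sub_cancel, smul_eq_mul] at hsubst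
  rw [intervalIntegral.integral_of_le hab.le, integral_Ioc_eq_integral_Ioo,
    eq_inv_mul_iff_mul_eq₀ hc.ne'] at hsubst
  rw [show p + q - 1 = (p + q - 2) + 1 by ring, rpow_add_one hc.ne', ← hsubst]
  ring

theorem inv_sq_sub_inv_sq_rpow {a b : ℝ} (ha : 0 < a) (hab : a < b) (p : ℝ) :
    ((a ^ 2)⁻¹ - (b ^ 2)⁻¹) ^ p = (b ^ 2 - a ^ 2) ^ p / (a ^ 2) ^ p / (b ^ 2) ^ p := by
  have hb : 0 < b := ha.trans hab
  rw [show (a ^ 2)⁻¹ - (b ^ 2)⁻¹ = (b ^ 2 - a ^ 2) / a ^ 2 / b ^ 2 by field_simp,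
    div_rpow (div_nonneg (by nlinarith) (by positivity)) (by positivity),
    div_rpow (by nlinarith) (by positivity)]

theorem sq_rpow {x : ℝ} (hx : 0 ≤ x) (p : ℝ) : (x ^ 2) ^ p = x ^ (2 * p) := by
  simpa using (rpow_natCast_mul hx 2 p).symm

theorem integral_Ioo_rpow_mul_sq_sub_rpow_mul_sq_sub_rpow {α β t u : ℝ} (hα : 0 < α) (hβ : 0 < β)
    (ht : 0 < t) (htu : t < u) :
    ∫ s in Ioo t u, s ^ (-(2 * α) - 2 * β) * s * (s ^ 2 - t ^ 2) ^ (α - 1) * (u ^ 2 - s ^ 2) ^ (β - 1)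
      = ProbabilityTheory.beta α β / 2 * t ^ (-(2 * β)) * u ^ (-(2 * α))
          * (u ^ 2 - t ^ 2) ^ (α + β - 1) := by
  have hu : 0 < u := ht.trans htu
  set φ : ℝ → ℝ := fun s => (s ^ 2)⁻¹
  have hanti : StrictAntiOn φ (Icc t u) := fun x hx y hy hxy => by
    have := ht.trans_le hx.1
    simp only [φ]; gcongr
  have himage : φ '' Ioo t u = Ioo (u ^ 2)⁻¹ (t ^ 2)⁻¹ :=
    ContinuousOn.image_Ioo_of_strictAntiOn htu.le
      (fun x hx => by have := ht.trans_le hx.1; simp only [φ]; fun_prop (disch := positivity)) hanti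
  have hderiv : ∀ s ∈ Ioo t u, HasDerivWithinAt φ (-(2 * s) / (s ^ 2) ^ 2) (Ioo t u) s := by
    intro s hs
    have := ht.trans hs.1
    simpa using ((hasDerivAt_pow 2 s).fun_inv (by positivity)).hasDerivWithinAt
  have hsubst := integral_image_eq_integral_abs_deriv_smul measurableSet_Ioo hderiv
    (hanti.injOn.mono Ioo_subset_Icc_self)
    (fun y => (y - (u ^ 2)⁻¹) ^ (β - 1) * ((t ^ 2)⁻¹ - y) ^ (α - 1))
  rw [himage, integral_Ioo_sub_rpow_mul_sub_rpow hβ hα (by gcongr)] at hsubst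
  have hpoint : ∀ s ∈ Ioo t u,
      s ^ (-(2 * α) - 2 * β) * s * (s ^ 2 - t ^ 2) ^ (α - 1) * (u ^ 2 - s ^ 2) ^ (β - 1)
        = (t ^ 2) ^ (α - 1) * (u ^ 2) ^ (β - 1) / 2 * (|-(2 * s) / (s ^ 2) ^ 2| •
            ((φ s - (u ^ 2)⁻¹) ^ (β - 1) * ((t ^ 2)⁻¹ - φ s) ^ (α - 1))) := by
    rintro s ⟨hts, hsu⟩
    have hs : 0 < s := ht.trans hts
    have hS : (s ^ 2) ^ (-α - β) * ((s ^ 2) ^ (α - 1) * (s ^ 2) ^ (β - 1)) * (s ^ 2) ^ 2 = 1 := by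
      rw [← rpow_natCast (s ^ 2) 2, ← rpow_add (by positivity), ← rpow_add (by positivity),
        ← rpow_add (by positivity),
        show -α - β + (α - 1 + (β - 1)) + ((2 : ℕ) : ℝ) = 0 by push_cast; ring, rpow_zero]
    simp only [φ]
    rw [inv_sq_sub_inv_sq_rpow hs hsu, inv_sq_sub_inv_sq_rpow ht hts, smul_eq_mul,
      abs_of_neg (div_neg_of_neg_of_pos (by linarith) (by positivity)),
      show -(2 * α) - 2 * β = 2 * (-α - β) by ring, ← sq_rpow hs.le]
    field_simp
    linear_combination (s ^ 2 - t ^ 2) ^ (α - 1) * (u ^ 2 - s ^ 2) ^ (β - 1) * hS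
  have ht_pow : t ^ (-(2 * β)) = (t ^ 2) ^ (α - 1) / (t ^ 2) ^ (α + β - 1) := by
    rw [← rpow_sub (by positivity), sq_rpow ht.le]; ring_nf
  have hu_pow : u ^ (-(2 * α)) = (u ^ 2) ^ (β - 1) / (u ^ 2) ^ (α + β - 1) := by
    rw [← rpow_sub (by positivity), sq_rpow hu.le]; ring_nf
  rw [setIntegral_congr_fun measurableSet_Ioo hpoint, integral_const_mul, ← hsubst, add_comm β α,
    inv_sq_sub_inv_sq_rpow ht htu, ht_pow, hu_pow, ProbabilityTheory.beta, ProbabilityTheory.beta,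
    add_comm β α]
  ring

theorem integral_Ioi_integral_Ioi_eq_integral_Ioi_integral_Ioo {E : Type*} [NormedAddCommGroup E]
    [NormedSpace ℝ E] {F : ℝ → ℝ → E} {t : ℝ}
    (hF : AEStronglyMeasurable (Function.uncurry F) (volume.prod volume))
    (hfin : ∫⁻ s in Ioi t, ∫⁻ u in Ioi s, ‖F s u‖ₑ < ⊤) :
    ∫ s in Ioi t, ∫ u in Ioi s, F s u = ∫ u in Ioi t, ∫ s in Ioo t u, F s u := by
  set μ := volume.restrict (Ioi t)
  set K : ℝ × ℝ → E := {p | p.1 < p.2}.indicator (Function.uncurry F)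
  have hK_meas : AEStronglyMeasurable K (μ.prod μ) := by
    refine (hF.mono_measure ?_).indicator (measurableSet_lt measurable_fst measurable_snd)
    rw [Measure.prod_restrict]; exact Measure.restrict_le_self
  have hK_fst (s u : ℝ) : K (s, u) = (Ioi s).indicator (F s) u := by simp [K, indicator]
  have hK_snd (s u : ℝ) : K (s, u) = (Iio u).indicator (fun s => F s u) s := by
    simp [K, indicator]
  have hK_int : Integrable K (μ.prod μ) := by
    refine ⟨hK_meas, ?_⟩
    rw [HasFiniteIntegral, lintegral_prod _ hK_meas.enorm]
    refine lt_of_le_of_lt (lintegral_mono fun s => ?_) hfin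
    calc ∫⁻ u, ‖K (s, u)‖ₑ ∂μ ≤ ∫⁻ u, ‖K (s, u)‖ₑ := lintegral_mono' Measure.restrict_le_self le_rfl
      _ = ∫⁻ u in Ioi s, ‖F s u‖ₑ := by
        simp_rw [hK_fst s, enorm_indicator_eq_indicator_enorm]
        rw [lintegral_indicator measurableSet_Ioi]
  calc ∫ s in Ioi t, ∫ u in Ioi s, F s u = ∫ s, ∫ u, K (s, u) ∂μ ∂μ := by
        refine setIntegral_congr_fun measurableSet_Ioi fun s (hs : t < s) => ?_
        simp_rw [hK_fst s]
        rw [integral_indicator measurableSet_Ioi, Measure.restrict_restrict measurableSet_Ioi,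
          Ioi_inter_Ioi, max_eq_left hs.le]
    _ = ∫ u, ∫ s, K (s, u) ∂μ ∂μ := integral_integral_swap hK_int
    _ = ∫ u in Ioi t, ∫ s in Ioo t u, F s u := by
        refine setIntegral_congr_fun measurableSet_Ioi fun u _ => ?_
        simp_rw [hK_snd _ u]
        rw [integral_indicator measurableSet_Iio, Measure.restrict_restrict measurableSet_Iio,
          Iio_inter_Ioi]

theorem EKminus_rpow_mul_EKminus (α β t : ℝ) (f : ℝ → ℝ) :
    EKminus α (fun s => s ^ (-(2 * α) - 2 * β) * EKminus β f s) t
      = 2 * (Gamma α)⁻¹ * (2 * (Gamma β)⁻¹) * ∫ s in Ioi t, ∫ u in Ioi s,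
          s ^ (-(2 * α) - 2 * β) * s * (s ^ 2 - t ^ 2) ^ (α - 1)
            * (f u * u * (u ^ 2 - s ^ 2) ^ (β - 1)) := by
  simp only [EKminus, ← integral_const_mul, ← integral_mul_const]
  exact setIntegral_congr_fun measurableSet_Ioi fun s _ =>
    setIntegral_congr_fun measurableSet_Ioi fun u _ => by ring

theorem lintegral_Ioi_lintegral_Ioi_enorm_eq {α β t : ℝ} (f : ℝ → ℝ) (ht : 0 ≤ t) :
    ∫⁻ s in Ioi t, ∫⁻ u in Ioi s,
        ‖s ^ (-(2 * α) - 2 * β) * s * (s ^ 2 - t ^ 2) ^ (α - 1)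
          * (f u * u * (u ^ 2 - s ^ 2) ^ (β - 1))‖ₑ
      = ∫⁻ s in Ioi t,
          ENNReal.ofReal (s ^ (-(2 * α) - 2 * β) * s * (s ^ 2 - t ^ 2) ^ (α - 1)) *
            ∫⁻ u in Ioi s, ENNReal.ofReal (|f u| * u * (u ^ 2 - s ^ 2) ^ (β - 1)) := by
  refine setLIntegral_congr_fun measurableSet_Ioi fun s (hts : t < s) => ?_
  rw [← lintegral_const_mul' _ _ ENNReal.ofReal_ne_top]
  refine setLIntegral_congr_fun measurableSet_Ioi fun u (hsu : s < u) => ?_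
  have hs : 0 < s := ht.trans_lt hts
  have hW : 0 ≤ s ^ (-(2 * α) - 2 * β) * s * (s ^ 2 - t ^ 2) ^ (α - 1) := by
    have : 0 ≤ s ^ 2 - t ^ 2 := by nlinarith
    positivity
  have hX : 0 ≤ (u ^ 2 - s ^ 2) ^ (β - 1) := rpow_nonneg (by nlinarith) _
  rw [Real.enorm_eq_ofReal_abs, ← ENNReal.ofReal_mul hW, abs_mul, abs_of_nonneg hW, abs_mul,
    abs_mul, abs_of_nonneg hX, abs_of_pos (hs.trans hsu)]

theorem ek_minus_weighted_composition_general (α β : ℝ) (hα : 0 < α) (hβ : 0 < β) (f : ℝ → ℝ)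
    (hmeas : Measurable f)
    (habs₂ : ∀ t > (0 : ℝ),
      ∫⁻ s in Ioi t,
        ENNReal.ofReal (s ^ (-(2 * α) - 2 * β) * s * (s ^ 2 - t ^ 2) ^ (α - 1)) *
          (∫⁻ u in Ioi s, ENNReal.ofReal (|f u| * u * (u ^ 2 - s ^ 2) ^ (β - 1))) < ⊤) :
    ∀ᵐ t ∂(volume.restrict (Ioi (0 : ℝ))),
      EKminus α (fun s => s ^ (-(2 * α) - 2 * β) * EKminus β f s) t
        = t ^ (-(2 * β)) * EKminus (α + β) (fun s => s ^ (-(2 * α)) * f s) t := by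
  rw [ae_restrict_iff' measurableSet_Ioi]
  refine ae_of_all _ fun t (ht : 0 < t) => ?_
  have hinner : ∀ u ∈ Ioi t, ∫ s in Ioo t u, s ^ (-(2 * α) - 2 * β) * s * (s ^ 2 - t ^ 2) ^ (α - 1)
        * (f u * u * (u ^ 2 - s ^ 2) ^ (β - 1))
      = ProbabilityTheory.beta α β / 2 * t ^ (-(2 * β))
          * (u ^ (-(2 * α)) * f u * u * (u ^ 2 - t ^ 2) ^ (α + β - 1)) := fun u (htu : t < u) => by
    calc _ = f u * u * ∫ s in Ioo t u, s ^ (-(2 * α) - 2 * β) * s * (s ^ 2 - t ^ 2) ^ (α - 1)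
            * (u ^ 2 - s ^ 2) ^ (β - 1) := by
          rw [← integral_const_mul]
          exact setIntegral_congr_fun measurableSet_Ioo fun s _ => by ring
      _ = _ := by rw [integral_Ioo_rpow_mul_sq_sub_rpow_mul_sq_sub_rpow hα hβ ht htu]; ring
  rw [EKminus_rpow_mul_EKminus, integral_Ioi_integral_Ioi_eq_integral_Ioi_integral_Ioo
      (by fun_prop) (by rw [lintegral_Ioi_lintegral_Ioi_enorm_eq f ht.le]; exact habs₂ t ht),
    setIntegral_congr_fun measurableSet_Ioi hinner, integral_const_mul, EKminus,
    ProbabilityTheory.beta]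
  have := Gamma_pos_of_pos hα
  have := Gamma_pos_of_pos hβ
  field_simp

/-- The weighted composition formula
`I^α_{-,2}( s^{-2α-2β} (I^β_{-,2} f)(s) )(t) = t^{-2β} (I^{α+β}_{-,2}( s^{-2α} f(s) ))(t)`
for almost all `t > 0`, provided all integrals converge absolutely. -/
theorem ek_minus_weighted_composition (α β : ℝ) (hα : 0 < α) (hβ : 0 < β) (f : ℝ → ℝ)
    (hmeas : Measurable f)
    (habs₁ : ∀ t > (0 : ℝ),
      ∫⁻ s in Ioi t,
        ENNReal.ofReal (|f s| * s ^ (-(2 * α)) * s * (s ^ 2 - t ^ 2) ^ (α + β - 1)) < ⊤)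
    (habs₂ : ∀ t > (0 : ℝ),
      ∫⁻ s in Ioi t,
        ENNReal.ofReal (s ^ (-(2 * α) - 2 * β) * s * (s ^ 2 - t ^ 2) ^ (α - 1)) *
          (∫⁻ u in Ioi s, ENNReal.ofReal (|f u| * u * (u ^ 2 - s ^ 2) ^ (β - 1))) < ⊤) :
    ∀ᵐ t ∂(volume.restrict (Ioi (0 : ℝ))),
      EKminus α (fun s => s ^ (-(2 * α) - 2 * β) * EKminus β f s) t
        = t ^ (-(2 * β)) * EKminus (α + β) (fun s => s ^ (-(2 * α)) * f s) t :=
  ek_minus_weighted_composition_general α β hα hβ f hmeas habs₂
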